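/- Every FUNTF of odd length for real ℓ₁² must include, up to sign, one of the canonical basis vectors e₁ or e₂. In particular, there is no FUNTF (x_j, x_j*)_{j=1}^3 of length 3 for ℓ₁² with all x_j having both coordinates nonzero. -/

import Mathlib

open scoped BigOperators

/-- `ℓ₁²`: `ℝ²` with the `ℓ₁` norm. -/
noncomputable abbrev L1two := PiLp 1 (fun _ : Fin 2 => ℝ)
/-- `ℓ_∞²`: `ℝ²` with the sup norm (the dual of `ℓ₁²`). -/
noncomputable abbrev Linftwo := PiLp ⊤ (fun _ : Fin 2 => ℝ)

/-- The duality pairing between `ℓ_∞²` and `ℓ₁²`. -/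
noncomputable def pair2 (f : Linftwo) (v : L1two) : ℝ :=
  ∑ i, (WithLp.equiv ⊤ (Fin 2 → ℝ) f) i * (WithLp.equiv 1 (Fin 2 → ℝ) v) i

noncomputable def e1 : L1two := (WithLp.equiv 1 (Fin 2 → ℝ)).symm ![1, 0]
noncomputable def e2 : L1two := (WithLp.equiv 1 (Fin 2 → ℝ)).symm ![0, 1]

lemma pair2_eq (f : Linftwo) (v : L1two) : pair2 f v = f 0 * v 0 + f 1 * v 1 := by
  simp [pair2, Fin.sum_univ_two, WithLp.equiv_apply]

lemma norm_L1two (v : L1two) : ‖v‖ = |v 0| + |v 1| := by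
  rw [PiLp.norm_eq_sum (by norm_num)]
  simp [Fin.sum_univ_two, Real.norm_eq_abs]

lemma abs_apply_le_norm (f : Linftwo) (i : Fin 2) : |f i| ≤ ‖f‖ := by
  rw [PiLp.norm_eq_ciSup]
  exact le_ciSup (f := fun i => ‖f i‖) (Set.Finite.bddAbove (Set.finite_range _)) i

lemma sum_apply' {N : ℕ} (c : Fin N → ℝ) (x : Fin N → L1two) (i : Fin 2) :
    (∑ j, c j • x j) i = ∑ j, c j * (x j) i := by
  classical
  induction (Finset.univ : Finset (Fin N)) using Finset.induction with
  | empty => simp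
  | insert _ _ h ih =>
      rename_i a s
      rw [Finset.sum_insert h, Finset.sum_insert h, PiLp.add_apply, PiLp.smul_apply, ih,
        smul_eq_mul]

@[simp] lemma e1_0 : e1 0 = 1 := by simp [e1, WithLp.equiv_symm_apply, PiLp.toLp_apply]
@[simp] lemma e1_1 : e1 1 = 0 := by simp [e1, WithLp.equiv_symm_apply, PiLp.toLp_apply]
@[simp] lemma e2_0 : e2 0 = 0 := by simp [e2, WithLp.equiv_symm_apply, PiLp.toLp_apply]
@[simp] lemma e2_1 : e2 1 = 1 := by simp [e2, WithLp.equiv_symm_apply, PiLp.toLp_apply]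

lemma ext_L1two (v w : L1two) (h0 : v 0 = w 0) (h1 : v 1 = w 1) : v = w := by
  ext i; fin_cases i <;> assumption

/-- Every FUNTF of odd length for real `ℓ₁²` contains, up to sign, a canonical basis vector. -/
theorem odd_funtf_ell1_two_contains_basis_vector
    (N : ℕ) (hodd : Odd N)
    (x : Fin N → L1two) (g : Fin N → Linftwo)
    (hx : ∀ j, ‖x j‖ = 1) (hg : ∀ j, ‖g j‖ = 1) (hpair : ∀ j, pair2 (g j) (x j) = 1)
    (hframe : ∀ v : L1two, ∑ j, pair2 (g j) v • x j = ((N : ℝ) / 2) • v) :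
    ∃ j, x j = e1 ∨ x j = -e1 ∨ x j = e2 ∨ x j = -e2 := by
  classical
  by_contra hcon
  push_neg at hcon
  -- coordinates
  have habs : ∀ j, |(x j) 0| + |(x j) 1| = 1 := by
    intro j; rw [← norm_L1two]; exact hx j
  have hne : ∀ j, (x j) 0 ≠ 0 ∧ (x j) 1 ≠ 0 := by
    intro j
    obtain ⟨h1, h2, h3, h4⟩ := hcon j
    constructor
    · intro ha
      have hb : |(x j) 1| = 1 := by have := habs j; rw [ha] at this; simpa using this
      rcases abs_eq (by norm_num : (0:ℝ) ≤ 1) |>.mp hb with hb1 | hb1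
      · exact h3 (ext_L1two _ _ (by simp [ha]) (by simp [hb1]))
      · exact h4 (ext_L1two _ _ (by simp [ha, PiLp.neg_apply]) (by simp [hb1, PiLp.neg_apply]))
    · intro hb
      have ha : |(x j) 0| = 1 := by have := habs j; rw [hb] at this; simpa using this
      rcases abs_eq (by norm_num : (0:ℝ) ≤ 1) |>.mp ha with ha1 | ha1
      · exact h1 (ext_L1two _ _ (by simp [ha1]) (by simp [hb]))
      · exact h2 (ext_L1two _ _ (by simp [ha1, PiLp.neg_apply]) (by simp [hb, PiLp.neg_apply]))
  -- norming functional structure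
  have hnorming : ∀ j, (g j) 0 * (x j) 0 = |(x j) 0| ∧ (g j) 1 * (x j) 1 = |(x j) 1| := by
    intro j
    have hp := hpair j; rw [pair2_eq] at hp
    have hg0 : |(g j) 0| ≤ 1 := (hg j) ▸ abs_apply_le_norm (g j) 0
    have hg1 : |(g j) 1| ≤ 1 := (hg j) ▸ abs_apply_le_norm (g j) 1
    have h0 : (g j) 0 * (x j) 0 ≤ |(x j) 0| := by
      calc (g j) 0 * (x j) 0 ≤ |(g j) 0 * (x j) 0| := le_abs_self _
        _ = |(g j) 0| * |(x j) 0| := abs_mul _ _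
        _ ≤ 1 * |(x j) 0| := by gcongr
        _ = |(x j) 0| := one_mul _
    have h1 : (g j) 1 * (x j) 1 ≤ |(x j) 1| := by
      calc (g j) 1 * (x j) 1 ≤ |(g j) 1 * (x j) 1| := le_abs_self _
        _ = |(g j) 1| * |(x j) 1| := abs_mul _ _
        _ ≤ 1 * |(x j) 1| := by gcongr
        _ = |(x j) 1| := one_mul _
    have hab := habs j
    constructor <;> linarith
  -- the key quantity
  set T : Fin N → ℝ := fun j => (g j) 0 * (x j) 1 + (g j) 1 * (x j) 0 with hT
  have hTpm : ∀ j, T j = 1 ∨ T j = -1 := by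
    intro j
    obtain ⟨ha, hb⟩ := hne j
    obtain ⟨h0, h1⟩ := hnorming j
    have hab := habs j
    rcases ha.lt_or_gt with ha' | ha' <;> rcases hb.lt_or_gt with hb' | hb'
    · -- a<0, b<0 : g0 = -1, g1 = -1, T = -(a+b) = |a|+|b| = 1
      left
      have hg0 : (g j) 0 = -1 := by
        have : (g j) 0 * (x j) 0 = -(x j) 0 := by rw [h0, abs_of_neg ha']
        field_simp at this; nlinarith [this]
      have hg1 : (g j) 1 = -1 := by
        have : (g j) 1 * (x j) 1 = -(x j) 1 := by rw [h1, abs_of_neg hb']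
        nlinarith [this]
      rw [hT]; simp only [hg0, hg1]
      rw [abs_of_neg ha', abs_of_neg hb'] at hab; linarith
    · -- a<0, b>0 : T = -1
      right
      have hg0 : (g j) 0 = -1 := by
        have : (g j) 0 * (x j) 0 = -(x j) 0 := by rw [h0, abs_of_neg ha']
        nlinarith [this]
      have hg1 : (g j) 1 = 1 := by
        have : (g j) 1 * (x j) 1 = (x j) 1 := by rw [h1, abs_of_pos hb']
        nlinarith [this]
      rw [hT]; simp only [hg0, hg1]
      rw [abs_of_neg ha', abs_of_pos hb'] at hab; linarith
    · -- a>0, b<0 : T = -1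
      right
      have hg0 : (g j) 0 = 1 := by
        have : (g j) 0 * (x j) 0 = (x j) 0 := by rw [h0, abs_of_pos ha']
        nlinarith [this]
      have hg1 : (g j) 1 = -1 := by
        have : (g j) 1 * (x j) 1 = -(x j) 1 := by rw [h1, abs_of_neg hb']
        nlinarith [this]
      rw [hT]; simp only [hg0, hg1]
      rw [abs_of_pos ha', abs_of_neg hb'] at hab; linarith
    · -- a>0, b>0 : T = 1
      left
      have hg0 : (g j) 0 = 1 := by
        have : (g j) 0 * (x j) 0 = (x j) 0 := by rw [h0, abs_of_pos ha']
        nlinarith [this]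
      have hg1 : (g j) 1 = 1 := by
        have : (g j) 1 * (x j) 1 = (x j) 1 := by rw [h1, abs_of_pos hb']
        nlinarith [this]
      rw [hT]; simp only [hg0, hg1]
      rw [abs_of_pos ha', abs_of_pos hb'] at hab; linarith
  -- sum of T is zero, from the frame identity
  have hsum1 : ∑ j, (g j) 0 * (x j) 1 = 0 := by
    have := congrArg (fun v : L1two => v 1) (hframe e1)
    simp only at this
    rw [sum_apply'] at this
    simp only [PiLp.smul_apply, e1_1, smul_eq_mul, mul_zero] at this
    rw [← this]
    apply Finset.sum_congr rfl
    intro j _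
    rw [pair2_eq]; simp
  have hsum2 : ∑ j, (g j) 1 * (x j) 0 = 0 := by
    have := congrArg (fun v : L1two => v 0) (hframe e2)
    simp only at this
    rw [sum_apply'] at this
    simp only [PiLp.smul_apply, e2_0, smul_eq_mul, mul_zero] at this
    rw [← this]
    apply Finset.sum_congr rfl
    intro j _
    rw [pair2_eq]; simp
  have hsumT : ∑ j, T j = 0 := by
    rw [hT]
    rw [Finset.sum_add_distrib, hsum1, hsum2, add_zero]
  -- parity argument
  set P : Finset (Fin N) := Finset.univ.filter (fun j => T j = 1) with hP
  have hcount : (N : ℝ) = 2 * P.card := by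
    have h1 : ∑ j, (T j + 1) = (N : ℝ) := by
      rw [Finset.sum_add_distrib, hsumT, zero_add]
      simp
    have h2 : ∑ j, (T j + 1) = 2 * P.card := by
      rw [← Finset.sum_filter_add_sum_filter_not Finset.univ (fun j => T j = 1)]
      have hA : ∑ j ∈ Finset.univ.filter (fun j => T j = 1), (T j + 1) = 2 * P.card := by
        have hconst : ∑ j ∈ Finset.univ.filter (fun j => T j = 1), (T j + 1)
            = ∑ _j ∈ Finset.univ.filter (fun j => T j = 1), (2:ℝ) := by
          apply Finset.sum_congr rfl
          intro j hj
          rw [Finset.mem_filter] at hj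
          rw [hj.2]; norm_num
        rw [hconst, Finset.sum_const, nsmul_eq_mul, mul_comm]
      have hB : ∑ j ∈ Finset.univ.filter (fun j => ¬ T j = 1), (T j + 1) = 0 := by
        apply Finset.sum_eq_zero
        intro j hj
        rw [Finset.mem_filter] at hj
        rcases hTpm j with h | h
        · exact absurd h hj.2
        · rw [h]; ring
      rw [hA, hB, add_zero]
    rw [← h1, h2]
  have : N = 2 * P.card := by exact_mod_cast hcount
  exact (Nat.not_even_iff_odd.mpr hodd) ⟨P.card, by omega⟩
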